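/- (Simplicity of the eigenvalues.) Every eigenvalue of the Boussinesq spectral problem is geometrically simple: if λ is an eigenvalue and φ, ψ ∈ C⁴([0,l]) are two nontrivial solutions of (σ(x)φ'')'' − (q(x)φ')' = λρ(x)φ on [0,l] with φ(0) = φ''(0) = φ(l) = φ''(l) = 0 (and likewise for ψ), then there exists c ∈ ℝ, c ≠ 0, with ψ = c·φ. -/

import Mathlib

open Set intervalIntegral MeasureTheory Filter Topology

noncomputable section

/-- The fourth-order Boussinesq differential operator `φ ↦ (σ φ'')'' − (q φ')'`. -/
def boussinesqOp (σ q : ℝ → ℝ) (φ : ℝ → ℝ) : ℝ → ℝ :=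
  fun x => deriv (deriv (fun t => σ t * deriv (deriv φ) t)) x
    - deriv (fun t => q t * deriv φ t) x

/-- `φ` is a (nontrivial) eigenfunction of the Boussinesq spectral problem on `[0,l]`
with eigenvalue `lam`: it is `C⁴`, not identically zero on `[0,l]`, satisfies
`(σ φ'')'' − (q φ')' = lam ρ φ` on `[0,l]` and the boundary conditions
`φ(0) = φ''(0) = φ(l) = φ''(l) = 0`. -/
def IsBoussinesqEigenpair (σ q ρ : ℝ → ℝ) (l lam : ℝ) (φ : ℝ → ℝ) : Prop :=
  ContDiff ℝ 4 φ ∧ (∃ x ∈ Icc (0:ℝ) l, φ x ≠ 0) ∧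
    (∀ x ∈ Icc (0:ℝ) l, boussinesqOp σ q φ x = lam * ρ x * φ x) ∧
    φ 0 = 0 ∧ deriv (deriv φ) 0 = 0 ∧ φ l = 0 ∧ deriv (deriv φ) l = 0

/-- `lam` is an eigenvalue of the Boussinesq spectral problem on `[0,l]`. -/
def IsBoussinesqEigenvalue (σ q ρ : ℝ → ℝ) (l lam : ℝ) : Prop :=
  ∃ φ : ℝ → ℝ, IsBoussinesqEigenpair σ q ρ l lam φ

/-!
Write `M = σ u''` for the bending moment and `Q = M' - q u'` for the shear force, so that the
equation reads `Q' = λ ρ u`. Two integrations by parts turn `λ ∫ ρ u² = ∫ u Q'` into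
`∫ σ u''² + q u'²` under the boundary conditions, hence `λ ≥ 0`.

For `λ ≥ 0`, a solution with `u(0) = u'(0) = u''(0) = 0` and `M'(0) > 0` cannot return to zero:
as long as `M' > 0` on `[0, t)`, the chain `M, u'', u', u ≥ 0` on `[0, t]` makes `Q` nondecreasing
there, so `M'(t) ≥ Q(0) = M'(0) > 0`; running the chain once more with strict inequalities gives
`u(l) > 0`. If instead `M'(0) = 0`, the Cauchy data of the linear first-order system for
`(u, u', M, M')` vanish and Grönwall's inequality gives `u = 0`. Hence a solution with
`u(0) = u'(0) = u''(0) = u(l) = 0` vanishes on `[0, l]`: an eigenfunction has `φ'(0) ≠ 0`, and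
`ψ - (ψ'(0) / φ'(0)) φ` is a solution of that kind.
-/

theorem apply_left_le_of_deriv_nonneg {f : ℝ → ℝ} {a b : ℝ} (hf : ContinuousOn f (Icc a b))
    (hf' : DifferentiableOn ℝ f (Ioo a b)) (h : ∀ x ∈ Ioo a b, 0 ≤ deriv f x) :
    ∀ x ∈ Icc a b, f a ≤ f x := fun x hx =>
  monotoneOn_of_deriv_nonneg (convex_Icc a b) hf (by rwa [interior_Icc])
    (by rwa [interior_Icc]) (left_mem_Icc.2 (hx.1.trans hx.2)) hx hx.1

theorem apply_left_lt_of_deriv_pos {f : ℝ → ℝ} {a b : ℝ} (hf : ContinuousOn f (Icc a b))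
    (h : ∀ x ∈ Ioo a b, 0 < deriv f x) : ∀ x ∈ Ioc a b, f a < f x := fun x hx =>
  strictMonoOn_of_deriv_pos (convex_Icc a b) hf (by rwa [interior_Icc])
    (left_mem_Icc.2 (hx.1.le.trans hx.2)) (Ioc_subset_Icc_self hx) hx.1

theorem pos_on_Icc_of_pos_on_Ico {g : ℝ → ℝ} {a b : ℝ} (hg : ContinuousOn g (Icc a b))
    (ha : 0 < g a) (step : ∀ t ∈ Ioc a b, (∀ s ∈ Ico a t, 0 < g s) → 0 < g t) :
    ∀ t ∈ Icc a b, 0 < g t := by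
  by_contra! hneg
  set B := Icc a b ∩ g ⁻¹' Iic 0
  have hB : B.Nonempty := hneg
  have hBbdd : BddBelow B := ⟨a, fun x hx => hx.1.1⟩
  have ht : sInf B ∈ B :=
    (hg.preimage_isClosed_of_isClosed isClosed_Icc isClosed_Iic).csInf_mem hB hBbdd
  have hta : a < sInf B := ht.1.1.lt_of_ne fun h => (h ▸ ht.2 : g a ≤ 0).not_gt ha
  refine (step (sInf B) ⟨hta, ht.1.2⟩ fun s hs => ?_).not_ge ht.2
  by_contra! hgs
  exact (csInf_le hBbdd ⟨⟨hs.1, hs.2.le.trans ht.1.2⟩, hgs⟩).not_gt hs.2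

theorem deriv_sub_const_smul {f g : ℝ → ℝ} (hf : Differentiable ℝ f)
    (hg : Differentiable ℝ g) (c : ℝ) : deriv (f - c • g) = deriv f - c • deriv g :=
  funext fun x => ((hf x).hasDerivAt.sub ((hg x).hasDerivAt.const_smul c)).deriv

def bendingMoment (σ u : ℝ → ℝ) : ℝ → ℝ := fun t => σ t * deriv (deriv u) t

def shearForce (σ q u : ℝ → ℝ) : ℝ → ℝ :=
  fun t => deriv (bendingMoment σ u) t - q t * deriv u t

def boussinesqState (σ u : ℝ → ℝ) (x : ℝ) : ℝ × ℝ × ℝ × ℝ :=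
  (u x, deriv u x, bendingMoment σ u x, deriv (bendingMoment σ u) x)

section Operator

variable {σ q u w : ℝ → ℝ}

theorem contDiff_bendingMoment (hσ : ContDiff ℝ 2 σ) (hu : ContDiff ℝ 4 u) :
    ContDiff ℝ 2 (bendingMoment σ u) :=
  hσ.mul hu.deriv'.deriv'

theorem deriv_deriv_eq_inv_mul_bendingMoment {x : ℝ} (hσx : σ x ≠ 0) :
    deriv (deriv u) x = (σ x)⁻¹ * bendingMoment σ u x :=
  (inv_mul_cancel_left₀ hσx _).symm

theorem bendingMoment_neg : bendingMoment σ (-u) = -bendingMoment σ u := by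
  funext t; simp [bendingMoment]

theorem hasDerivAt_shearForce (hσ : ContDiff ℝ 2 σ) (hq : Differentiable ℝ q)
    (hu : ContDiff ℝ 4 u) (x : ℝ) :
    HasDerivAt (shearForce σ q u) (boussinesqOp σ q u x) x :=
  have hm : ContDiff ℝ 1 (deriv (bendingMoment σ u)) := (contDiff_bendingMoment hσ hu).deriv'
  have hu1 : ContDiff ℝ 3 (deriv u) := hu.deriv'
  (hm.differentiable one_ne_zero x).hasDerivAt.sub
    ((hq.mul (hu1.differentiable (by norm_num))) x).hasDerivAt

theorem deriv_shearForce (hσ : ContDiff ℝ 2 σ) (hq : Differentiable ℝ q)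
    (hu : ContDiff ℝ 4 u) : deriv (shearForce σ q u) = boussinesqOp σ q u :=
  funext fun x => (hasDerivAt_shearForce hσ hq hu x).deriv

theorem continuous_boussinesqOp (hσ : ContDiff ℝ 2 σ) (hq : ContDiff ℝ 1 q)
    (hu : ContDiff ℝ 4 u) : Continuous (boussinesqOp σ q u) :=
  have hm : ContDiff ℝ 1 (deriv (bendingMoment σ u)) := (contDiff_bendingMoment hσ hu).deriv'
  have hu1 : ContDiff ℝ 3 (deriv u) := hu.deriv'
  (hm.continuous_deriv le_rfl).sub ((hq.mul (hu1.of_le (by norm_num))).continuous_deriv le_rfl)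

theorem deriv_deriv_bendingMoment_eq {x lam r : ℝ} (hq : DifferentiableAt ℝ q x)
    (hu : DifferentiableAt ℝ (deriv u) x) (heq : boussinesqOp σ q u x = lam * r * u x) :
    deriv (deriv (bendingMoment σ u)) x
      = lam * r * u x + deriv q x * deriv u x + q x * deriv (deriv u) x := by
  have h : deriv (deriv (bendingMoment σ u)) x - deriv (fun t => q t * deriv u t) x = _ := heq
  rw [deriv_fun_mul hq hu] at h
  linarith

theorem boussinesqOp_neg : boussinesqOp σ q (-u) = -boussinesqOp σ q u := by
  funext x; simp [boussinesqOp, mul_neg]; ring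

theorem boussinesqOp_sub_const_smul (hσ : ContDiff ℝ 2 σ) (hq : Differentiable ℝ q)
    (hu : ContDiff ℝ 4 u) (hw : ContDiff ℝ 4 w) (c : ℝ) :
    boussinesqOp σ q (u - c • w) = boussinesqOp σ q u - c • boussinesqOp σ q w := by
  have diff {f : ℝ → ℝ} {n : ℕ} (hf : ContDiff ℝ (n + 1) f) : Differentiable ℝ f :=
    hf.differentiable (by simp)
  have d1 := deriv_sub_const_smul (diff hu) (diff hw) c
  have d2 : deriv (deriv (u - c • w)) = deriv (deriv u) - c • deriv (deriv w) := by
    rw [d1]; exact deriv_sub_const_smul (diff hu.deriv') (diff hw.deriv') c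
  have hm : bendingMoment σ (u - c • w) = bendingMoment σ u - c • bendingMoment σ w := by
    funext t; simp only [bendingMoment, d2, Pi.sub_apply, Pi.smul_apply, smul_eq_mul]; ring
  have hs : shearForce σ q (u - c • w) = shearForce σ q u - c • shearForce σ q w := by
    funext t
    simp only [shearForce, hm, d1, deriv_sub_const_smul (diff (contDiff_bendingMoment hσ hu))
      (diff (contDiff_bendingMoment hσ hw)), Pi.sub_apply, Pi.smul_apply, smul_eq_mul]
    ring
  have huw : ContDiff ℝ 4 (u - c • w) := hu.sub (hw.const_smul c)
  rw [← deriv_shearForce hσ hq huw, hs,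
    deriv_sub_const_smul (fun x => (hasDerivAt_shearForce hσ hq hu x).differentiableAt)
      (fun x => (hasDerivAt_shearForce hσ hq hw x).differentiableAt),
    deriv_shearForce hσ hq hu, deriv_shearForce hσ hq hw]

theorem integral_mul_boussinesqOp_self (hσ : ContDiff ℝ 2 σ) (hq : ContDiff ℝ 1 q)
    (hu : ContDiff ℝ 4 u) {a b : ℝ} (ha : u a = 0) (ha₂ : deriv (deriv u) a = 0)
    (hb : u b = 0) (hb₂ : deriv (deriv u) b = 0) :
    ∫ x in a..b, u x * boussinesqOp σ q u x
      = ∫ x in a..b, (σ x * deriv (deriv u) x ^ 2 + q x * deriv u x ^ 2) := by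
  have hu1 : ContDiff ℝ 3 (deriv u) := hu.deriv'
  have hu2 : ContDiff ℝ 2 (deriv (deriv u)) := hu1.deriv'
  have hm := contDiff_bendingMoment hσ hu
  have hm1 : ContDiff ℝ 1 (deriv (bendingMoment σ u)) := hm.deriv'
  have ibp₁ := integral_mul_deriv_eq_deriv_mul (a := a) (b := b)
    (fun x _ => (hu.differentiable (by norm_num) x).hasDerivAt)
    (fun x _ => hasDerivAt_shearForce hσ (hq.differentiable one_ne_zero) hu x)
    (hu1.continuous.intervalIntegrable _ _)
    ((continuous_boussinesqOp hσ hq hu).intervalIntegrable _ _)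
  have ibp₂ := integral_mul_deriv_eq_deriv_mul (a := a) (b := b)
    (fun x _ => (hu1.differentiable (by norm_num) x).hasDerivAt)
    (fun x _ => (hm.differentiable (by norm_num) x).hasDerivAt)
    (hu2.continuous.intervalIntegrable _ _) (hm1.continuous.intervalIntegrable _ _)
  have hma : bendingMoment σ u a = 0 := by simp [bendingMoment, ha₂]
  have hmb : bendingMoment σ u b = 0 := by simp [bendingMoment, hb₂]
  simp only [ha, hb, hma, hmb, zero_mul, mul_zero, sub_zero, zero_sub] at ibp₁ ibp₂
  have hshear : ∫ x in a..b, deriv u x * shearForce σ q u x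
      = (∫ x in a..b, deriv u x * deriv (bendingMoment σ u) x)
        - ∫ x in a..b, q x * deriv u x ^ 2 := by
    rw [← intervalIntegral.integral_sub]
    · congr 1; funext x; simp only [shearForce]; ring
    · exact (hu1.continuous.mul hm1.continuous).intervalIntegrable a b
    · exact (hq.continuous.mul (hu1.continuous.pow 2)).intervalIntegrable a b
  have hmoment : ∫ x in a..b, deriv (deriv u) x * bendingMoment σ u x
      = ∫ x in a..b, σ x * deriv (deriv u) x ^ 2 := by
    congr 1; funext x; simp only [bendingMoment]; ring
  rw [intervalIntegral.integral_add]
  · linarith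
  · exact (hσ.continuous.mul (hu2.continuous.pow 2)).intervalIntegrable a b
  · exact (hq.continuous.mul (hu1.continuous.pow 2)).intervalIntegrable a b

theorem hasDerivAt_boussinesqState (hσ : ContDiff ℝ 2 σ) (hu : ContDiff ℝ 4 u) (x : ℝ) :
    HasDerivAt (boussinesqState σ u) (deriv u x, deriv (deriv u) x,
      deriv (bendingMoment σ u) x, deriv (deriv (bendingMoment σ u)) x) x :=
  have hu1 : ContDiff ℝ 3 (deriv u) := hu.deriv'
  have hm := contDiff_bendingMoment hσ hu
  have hm1 : ContDiff ℝ 1 (deriv (bendingMoment σ u)) := hm.deriv'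
  (hu.differentiable (by norm_num) x).hasDerivAt.prodMk
    ((hu1.differentiable (by norm_num) x).hasDerivAt.prodMk
    ((hm.differentiable (by norm_num) x).hasDerivAt.prodMk
    (hm1.differentiable one_ne_zero x).hasDerivAt))

theorem norm_deriv_boussinesqState_le (hσ : ContDiff ℝ 2 σ) (hq : Differentiable ℝ q)
    (hu : ContDiff ℝ 4 u) {x lam r M : ℝ} (hσx : σ x ≠ 0)
    (heq : boussinesqOp σ q u x = lam * r * u x)
    (hM : 1 + |(σ x)⁻¹| + |lam * r| + |deriv q x| + |q x * (σ x)⁻¹| ≤ M) :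
    ‖deriv (boussinesqState σ u) x‖ ≤ M * ‖boussinesqState σ u x‖ := by
  set Y := boussinesqState σ u x
  have hu1 : ContDiff ℝ 3 (deriv u) := hu.deriv'
  have hu₂ := deriv_deriv_eq_inv_mul_bendingMoment (u := u) hσx
  have hm₂ := deriv_deriv_bendingMoment_eq (hq x) (hu1.differentiable (by norm_num) x) heq
  have hY₁ : |u x| ≤ ‖Y‖ := norm_fst_le Y
  have hY₂ : |deriv u x| ≤ ‖Y‖ := (norm_fst_le Y.2).trans (norm_snd_le Y)
  have hY₃ : |bendingMoment σ u x| ≤ ‖Y‖ :=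
    ((norm_fst_le Y.2.2).trans (norm_snd_le Y.2)).trans (norm_snd_le Y)
  have hY₄ : |deriv (bendingMoment σ u) x| ≤ ‖Y‖ :=
    ((norm_snd_le Y.2.2).trans (norm_snd_le Y.2)).trans (norm_snd_le Y)
  have ha := abs_nonneg (σ x)⁻¹
  have hb := abs_nonneg (lam * r)
  have hc := abs_nonneg (deriv q x)
  have hd := abs_nonneg (q x * (σ x)⁻¹)
  have hY := norm_nonneg Y
  have hYM : ‖Y‖ ≤ M * ‖Y‖ := le_mul_of_one_le_left hY (by linarith)
  rw [(hasDerivAt_boussinesqState hσ hu x).deriv]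
  simp only [norm_prod_le_iff, Real.norm_eq_abs, hm₂, hu₂, ← mul_assoc]
  refine ⟨hY₂.trans hYM, ?_, hY₄.trans hYM, ?_⟩
  · rw [abs_mul]
    nlinarith [mul_le_mul_of_nonneg_left hY₃ ha]
  · calc |lam * r * u x + deriv q x * deriv u x + q x * (σ x)⁻¹ * bendingMoment σ u x|
        ≤ |lam * r| * |u x| + |deriv q x| * |deriv u x|
          + |q x * (σ x)⁻¹| * |bendingMoment σ u x| := by
          simpa only [abs_mul] using abs_add_three (lam * r * u x) (deriv q x * deriv u x)
            (q x * (σ x)⁻¹ * bendingMoment σ u x)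
      _ ≤ M * ‖Y‖ := by
          nlinarith [mul_le_mul_of_nonneg_left hY₁ hb, mul_le_mul_of_nonneg_left hY₂ hc,
            mul_le_mul_of_nonneg_left hY₃ hd]

end Operator

section Solutions

variable {σ q ρ u : ℝ → ℝ} {l lam : ℝ}

theorem IsBoussinesqEigenpair.eigenvalue_nonneg {φ : ℝ → ℝ} (hl : 0 < l)
    (hσ : ContDiff ℝ 2 σ) (hq : ContDiff ℝ 1 q) (hρ : Continuous ρ)
    (hσnn : ∀ x ∈ Icc 0 l, 0 ≤ σ x) (hqnn : ∀ x ∈ Icc 0 l, 0 ≤ q x)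
    (hρpos : ∀ x ∈ Icc 0 l, 0 < ρ x) (hφ : IsBoussinesqEigenpair σ q ρ l lam φ) :
    0 ≤ lam := by
  obtain ⟨hφ4, ⟨x₀, hx₀, hφx₀⟩, heq, h0, h0₂, hl0, hl₂⟩ := hφ
  have hmass : 0 < ∫ x in 0..l, ρ x * φ x ^ 2 := by
    simpa using integral_lt_integral_of_continuousOn_of_le_of_exists_lt hl continuousOn_const
      (hρ.mul (hφ4.continuous.pow 2)).continuousOn
      (fun x hx => mul_nonneg (hρpos x (Ioc_subset_Icc_self hx)).le (sq_nonneg _))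
      ⟨x₀, hx₀, mul_pos (hρpos x₀ hx₀) (sq_pos_iff.2 hφx₀)⟩
  have henergy : lam * ∫ x in 0..l, ρ x * φ x ^ 2
      = ∫ x in 0..l, (σ x * deriv (deriv φ) x ^ 2 + q x * deriv φ x ^ 2) := by
    rw [← integral_mul_boussinesqOp_self hσ hq hφ4 h0 h0₂ hl0 hl₂,
      ← intervalIntegral.integral_const_mul]
    refine integral_congr fun x hx => ?_
    rw [uIcc_of_le hl.le] at hx
    simp only [heq x hx]; ring
  refine nonneg_of_mul_nonneg_left (henergy ▸ integral_nonneg hl.le fun x hx => ?_) hmass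
  exact add_nonneg (mul_nonneg (hσnn x hx) (sq_nonneg _)) (mul_nonneg (hqnn x hx) (sq_nonneg _))

theorem eqOn_zero_of_initial_data_eq_zero (hσ : ContDiff ℝ 2 σ) (hq : ContDiff ℝ 1 q)
    (hρ : Continuous ρ) (hσ0 : ∀ x ∈ Icc 0 l, σ x ≠ 0) (hu : ContDiff ℝ 4 u)
    (heq : ∀ x ∈ Icc 0 l, boussinesqOp σ q u x = lam * ρ x * u x)
    (h0 : u 0 = 0) (h1 : deriv u 0 = 0) (h2 : deriv (deriv u) 0 = 0)
    (h3 : deriv (bendingMoment σ u) 0 = 0) : ∀ x ∈ Icc 0 l, u x = 0 := by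
  have hσinv := hσ.continuous.continuousOn.inv₀ hσ0
  obtain ⟨M, hM⟩ := (isCompact_Icc (a := 0) (b := l)).exists_bound_of_continuousOn
    (f := fun x => 1 + |(σ x)⁻¹| + |lam * ρ x| + |deriv q x| + |q x * (σ x)⁻¹|)
    ((((continuousOn_const.add hσinv.abs).add (continuous_const.mul hρ).continuousOn.abs).add
      (hq.continuous_deriv le_rfl).continuousOn.abs).add
      (hq.continuous.continuousOn.mul hσinv).abs)
  have hY := eq_zero_of_abs_deriv_le_mul_abs_self_of_eq_zero_right (K := M)
    (fun x _ => (hasDerivAt_boussinesqState hσ hu x).continuousAt.continuousWithinAt)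
    (fun x _ => (hasDerivAt_boussinesqState hσ hu x).differentiableAt.hasDerivAt.hasDerivWithinAt)
    (by simp [boussinesqState, bendingMoment, h0, h1, h2, h3])
    fun x hx => norm_deriv_boussinesqState_le hσ (hq.differentiable one_ne_zero) hu
      (hσ0 x (Ico_subset_Icc_self hx)) (heq x (Ico_subset_Icc_self hx))
      ((le_abs_self _).trans (hM x (Ico_subset_Icc_self hx)))
  exact fun x hx => congrArg Prod.fst (hY x hx)

theorem deriv_bendingMoment_pos_of_pos_on_Ico (hσ : ContDiff ℝ 2 σ) (hq : Differentiable ℝ q)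
    (hσpos : ∀ x ∈ Icc 0 l, 0 < σ x) (hqnn : ∀ x ∈ Icc 0 l, 0 ≤ q x)
    (hlamρ : ∀ x ∈ Icc 0 l, 0 ≤ lam * ρ x) (hu : ContDiff ℝ 4 u)
    (heq : ∀ x ∈ Icc 0 l, boussinesqOp σ q u x = lam * ρ x * u x)
    (h0 : u 0 = 0) (h1 : deriv u 0 = 0) (h2 : deriv (deriv u) 0 = 0) {t : ℝ} (ht : t ∈ Ioc 0 l)
    (hpos : ∀ s ∈ Ico 0 t, 0 < deriv (bendingMoment σ u) s) :
    0 < deriv (bendingMoment σ u) t := by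
  have hu1 : ContDiff ℝ 3 (deriv u) := hu.deriv'
  have hm := contDiff_bendingMoment hσ hu
  have hsub : Icc 0 t ⊆ Icc 0 l := Icc_subset_Icc le_rfl ht.2
  have hsf := hasDerivAt_shearForce hσ hq hu
  have hmnn : ∀ s ∈ Icc 0 t, 0 ≤ bendingMoment σ u s := by
    have := apply_left_le_of_deriv_nonneg hm.continuous.continuousOn
      (hm.differentiable (by norm_num)).differentiableOn
      fun s hs => (hpos s (Ioo_subset_Ico_self hs)).le
    rwa [bendingMoment, h2, mul_zero] at this
  have hu1nn : ∀ s ∈ Icc 0 t, 0 ≤ deriv u s := by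
    have := apply_left_le_of_deriv_nonneg hu1.continuous.continuousOn
      (hu1.differentiable (by norm_num)).differentiableOn fun s hs => by
        have hs' := hsub (Ioo_subset_Icc_self hs)
        rw [deriv_deriv_eq_inv_mul_bendingMoment (hσpos s hs').ne']
        exact mul_nonneg (inv_nonneg.2 (hσpos s hs').le) (hmnn s (Ioo_subset_Icc_self hs))
    rwa [h1] at this
  have hunn : ∀ s ∈ Icc 0 t, 0 ≤ u s := by
    have := apply_left_le_of_deriv_nonneg hu.continuous.continuousOn
      (hu.differentiable (by norm_num)).differentiableOn
      fun s hs => hu1nn s (Ioo_subset_Icc_self hs)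
    rwa [h0] at this
  have hshear : shearForce σ q u 0 ≤ shearForce σ q u t :=
    apply_left_le_of_deriv_nonneg (fun x _ => (hsf x).continuousAt.continuousWithinAt)
      (fun x _ => (hsf x).differentiableAt.differentiableWithinAt)
      (fun s hs => by
        rw [(hsf s).deriv, heq s (hsub (Ioo_subset_Icc_self hs))]
        exact mul_nonneg (hlamρ s (hsub (Ioo_subset_Icc_self hs)))
          (hunn s (Ioo_subset_Icc_self hs)))
      t (right_mem_Icc.2 ht.1.le)
  simp only [shearForce, h1, mul_zero, sub_zero] at hshear
  nlinarith [hpos 0 (left_mem_Ico.2 ht.1), mul_nonneg (hqnn t (hsub (right_mem_Icc.2 ht.1.le)))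
    (hu1nn t (right_mem_Icc.2 ht.1.le))]

theorem pos_at_right_of_deriv_bendingMoment_pos (hl : 0 < l) (hσ : ContDiff ℝ 2 σ)
    (hq : Differentiable ℝ q) (hσpos : ∀ x ∈ Icc 0 l, 0 < σ x)
    (hqnn : ∀ x ∈ Icc 0 l, 0 ≤ q x) (hlamρ : ∀ x ∈ Icc 0 l, 0 ≤ lam * ρ x)
    (hu : ContDiff ℝ 4 u) (heq : ∀ x ∈ Icc 0 l, boussinesqOp σ q u x = lam * ρ x * u x)
    (h0 : u 0 = 0) (h1 : deriv u 0 = 0) (h2 : deriv (deriv u) 0 = 0)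
    (h3 : 0 < deriv (bendingMoment σ u) 0) : 0 < u l := by
  have hu1 : ContDiff ℝ 3 (deriv u) := hu.deriv'
  have hm := contDiff_bendingMoment hσ hu
  have hm1 : ContDiff ℝ 1 (deriv (bendingMoment σ u)) := hm.deriv'
  have hm' := pos_on_Icc_of_pos_on_Ico hm1.continuous.continuousOn h3 fun t ht hpos =>
    deriv_bendingMoment_pos_of_pos_on_Ico hσ hq hσpos hqnn hlamρ hu heq h0 h1 h2 ht hpos
  have hmpos : ∀ x ∈ Ioc 0 l, 0 < bendingMoment σ u x := by
    have := apply_left_lt_of_deriv_pos hm.continuous.continuousOn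
      fun x hx => hm' x (Ioo_subset_Icc_self hx)
    rwa [bendingMoment, h2, mul_zero] at this
  have hu1pos : ∀ x ∈ Ioc 0 l, 0 < deriv u x := by
    have := apply_left_lt_of_deriv_pos hu1.continuous.continuousOn fun x hx => by
      have hx' := Ioo_subset_Icc_self hx
      rw [deriv_deriv_eq_inv_mul_bendingMoment (hσpos x hx').ne']
      exact mul_pos (inv_pos.2 (hσpos x hx')) (hmpos x (Ioo_subset_Ioc_self hx))
    rwa [h1] at this
  have := apply_left_lt_of_deriv_pos hu.continuous.continuousOn
    (fun x hx => hu1pos x (Ioo_subset_Ioc_self hx)) l (right_mem_Ioc.2 hl)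
  rwa [h0] at this

theorem eqOn_zero_of_deriv_zero_eq_zero (hl : 0 < l) (hσ : ContDiff ℝ 2 σ)
    (hq : ContDiff ℝ 1 q) (hρ : Continuous ρ) (hσpos : ∀ x ∈ Icc 0 l, 0 < σ x)
    (hqnn : ∀ x ∈ Icc 0 l, 0 ≤ q x) (hlamρ : ∀ x ∈ Icc 0 l, 0 ≤ lam * ρ x)
    (hu : ContDiff ℝ 4 u) (heq : ∀ x ∈ Icc 0 l, boussinesqOp σ q u x = lam * ρ x * u x)
    (h0 : u 0 = 0) (h1 : deriv u 0 = 0) (h2 : deriv (deriv u) 0 = 0) (hl0 : u l = 0) :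
    ∀ x ∈ Icc 0 l, u x = 0 := by
  have shoot {w : ℝ → ℝ} := pos_at_right_of_deriv_bendingMoment_pos (u := w) hl hσ
    (hq.differentiable one_ne_zero) hσpos hqnn hlamρ
  rcases lt_trichotomy (deriv (bendingMoment σ u) 0) 0 with hneg | hzero | hpos
  · have h := shoot (w := -u) hu.neg
      (fun x hx => by rw [boussinesqOp_neg, Pi.neg_apply, Pi.neg_apply, heq x hx, mul_neg])
      (by rw [Pi.neg_apply, h0, neg_zero]) (by rw [deriv.neg, h1, neg_zero])
      (by rw [deriv.neg', deriv.fun_neg, h2, neg_zero])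
      (by rw [bendingMoment_neg, deriv.neg]; linarith)
    rw [Pi.neg_apply, hl0, neg_zero] at h
    exact absurd h (lt_irrefl 0)
  · exact eqOn_zero_of_initial_data_eq_zero hσ hq hρ (fun x hx => (hσpos x hx).ne') hu heq
      h0 h1 h2 hzero
  · exact absurd hl0 (shoot hu heq h0 h1 h2 hpos).ne'

theorem IsBoussinesqEigenpair.deriv_left_ne_zero {φ : ℝ → ℝ} (hl : 0 < l)
    (hσ : ContDiff ℝ 2 σ) (hq : ContDiff ℝ 1 q) (hρ : Continuous ρ)
    (hσpos : ∀ x ∈ Icc 0 l, 0 < σ x) (hqnn : ∀ x ∈ Icc 0 l, 0 ≤ q x)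
    (hlamρ : ∀ x ∈ Icc 0 l, 0 ≤ lam * ρ x) (hφ : IsBoussinesqEigenpair σ q ρ l lam φ) :
    deriv φ 0 ≠ 0 := by
  obtain ⟨hφ4, ⟨x, hx, hφx⟩, heq, h0, h2, hl0, -⟩ := hφ
  exact fun h1 => hφx (eqOn_zero_of_deriv_zero_eq_zero hl hσ hq hρ hσpos hqnn hlamρ hφ4 heq
    h0 h1 h2 hl0 x hx)

theorem IsBoussinesqEigenpair.eqOn_const_mul {φ ψ : ℝ → ℝ} (hl : 0 < l)
    (hσ : ContDiff ℝ 2 σ) (hq : ContDiff ℝ 1 q) (hρ : Continuous ρ)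
    (hσpos : ∀ x ∈ Icc 0 l, 0 < σ x) (hqnn : ∀ x ∈ Icc 0 l, 0 ≤ q x)
    (hlamρ : ∀ x ∈ Icc 0 l, 0 ≤ lam * ρ x) (hφ : IsBoussinesqEigenpair σ q ρ l lam φ)
    (hψ : IsBoussinesqEigenpair σ q ρ l lam ψ) {c : ℝ} (hc : deriv ψ 0 = c * deriv φ 0) :
    ∀ x ∈ Icc 0 l, ψ x = c * φ x := by
  obtain ⟨hφ4, -, hφeq, hφ0, hφ2, hφl, -⟩ := hφ
  obtain ⟨hψ4, -, hψeq, hψ0, hψ2, hψl, -⟩ := hψ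
  have hφ1 : ContDiff ℝ 3 (deriv φ) := hφ4.deriv'
  have hψ1 : ContDiff ℝ 3 (deriv ψ) := hψ4.deriv'
  have d1 := deriv_sub_const_smul (hψ4.differentiable (by norm_num))
    (hφ4.differentiable (by norm_num)) c
  have d2 := deriv_sub_const_smul (hψ1.differentiable (by norm_num))
    (hφ1.differentiable (by norm_num)) c
  have hχ := eqOn_zero_of_deriv_zero_eq_zero hl hσ hq hρ hσpos hqnn hlamρ
    (u := ψ - c • φ) (hψ4.sub (hφ4.const_smul c)) (fun x hx => ?_)
    (by simp only [Pi.sub_apply, Pi.smul_apply, hψ0, hφ0, smul_zero, sub_zero])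
    (by rw [d1, Pi.sub_apply, Pi.smul_apply, smul_eq_mul, hc, sub_self])
    (by rw [d1, d2, Pi.sub_apply, Pi.smul_apply, hψ2, hφ2, smul_zero, sub_zero])
    (by simp only [Pi.sub_apply, Pi.smul_apply, hψl, hφl, smul_zero, sub_zero])
  · exact fun x hx => sub_eq_zero.1 (hχ x hx)
  · rw [boussinesqOp_sub_const_smul hσ (hq.differentiable one_ne_zero) hψ4 hφ4]
    simp only [Pi.sub_apply, Pi.smul_apply, smul_eq_mul, hψeq x hx, hφeq x hx]
    ring

end Solutions

/-- **Simplicity of the eigenvalues.** If `lam` is an eigenvalue with eigenfunctions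
`φ` and `ψ`, then `ψ = c • φ` on `[0,l]` for some nonzero constant `c`. -/
theorem boussinesq_eigenvalue_simple
    (l : ℝ) (hl : 0 < l)
    (ρ σ q : ℝ → ℝ)
    (hρs : ContDiff ℝ 3 ρ) (hσs : ContDiff ℝ 3 σ) (hqs : ContDiff ℝ 1 q)
    (ρ0 σ0 : ℝ) (hρ0 : 0 < ρ0) (hσ0 : 0 < σ0)
    (hρb : ∀ x ∈ Icc (0:ℝ) l, ρ0 ≤ ρ x)
    (hσb : ∀ x ∈ Icc (0:ℝ) l, σ0 ≤ σ x)
    (hqb : ∀ x ∈ Icc (0:ℝ) l, 0 ≤ q x)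
    (lam : ℝ) (φ ψ : ℝ → ℝ)
    (hφ : IsBoussinesqEigenpair σ q ρ l lam φ)
    (hψ : IsBoussinesqEigenpair σ q ρ l lam ψ) :
    ∃ c : ℝ, c ≠ 0 ∧ ∀ x ∈ Icc (0:ℝ) l, ψ x = c * φ x := by
  have hσ : ContDiff ℝ 2 σ := hσs.of_le (by norm_num)
  have hρ := hρs.continuous
  have hρpos : ∀ x ∈ Icc 0 l, 0 < ρ x := fun x hx => hρ0.trans_le (hρb x hx)
  have hσpos : ∀ x ∈ Icc 0 l, 0 < σ x := fun x hx => hσ0.trans_le (hσb x hx)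
  have hlam : 0 ≤ lam :=
    hφ.eigenvalue_nonneg hl hσ hqs hρ (fun x hx => (hσpos x hx).le) hqb hρpos
  have hlamρ : ∀ x ∈ Icc 0 l, 0 ≤ lam * ρ x := fun x hx => mul_nonneg hlam (hρpos x hx).le
  have hφ' := hφ.deriv_left_ne_zero hl hσ hqs hρ hσpos hqb hlamρ
  have hψ' := hψ.deriv_left_ne_zero hl hσ hqs hρ hσpos hqb hlamρ
  exact ⟨deriv ψ 0 / deriv φ 0, div_ne_zero hψ' hφ',
    hφ.eqOn_const_mul hl hσ hqs hρ hσpos hqb hlamρ hψ (div_mul_cancel₀ _ hφ').symm⟩
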